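/- Let φ : [0,∞) → [0,∞) be strictly increasing, continuous, concave, with φ(0) = 0 and lim_{t→∞} φ(t) = ∞, assume ∫₀¹ ds/φ(s) < ∞, let N > 0 satisfy 2^{−N}(1 + ∫₀^{φ⁻¹(2^{−N})} ds/φ(s)) = 1, set α_k = 2^{−(N+k)}(1 + ∫₀^{φ⁻¹(2^{−(N+k)})} ds/φ(s)) for k ≥ 0, and β_k = (α_{k−1} − 2α_k)/4 for k ≥ 1. Define λ_k = α_{k−1}/β_k for k ≥ 1. Then there exists a constant C > 0, depending only on φ, such that for all k ≥ 2, sup_{1 ≤ ℓ < k} λ_ℓ ≤ C λ_k. -/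

import Mathlib

/-!
Put `x j = φ⁻¹ (2 ^ (-(N + j)))`, so that `φ (x j) = 2 φ (x (j + 1))`, and
`I y = ∫₀^y ds / φ s`. Then `α j - 2 α (j + 1) = 2 ^ (-(N + j)) (I (x j) - I (x (j + 1)))`,
hence `λ (j + 1) = 4 (1 + I (x j)) / ∫_{x (j + 1)}^{x j} ds / φ s`, with numerator between `4` and
`4 (1 + I (x 0))`. Concavity and `φ 0 = 0` make `φ t / t` nonincreasing, so `2 x (j + 1) ≤ x j`;
as `1 / φ` is nonincreasing, the denominator is then within a factor `2` of
`ρ j = x j / φ (x j)`, and `ρ` is nonincreasing in `j`. Thus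
`λ ℓ ≲ 1 / ρ (ℓ - 1) ≤ 1 / ρ (k - 1) ≲ λ k`.
-/

open Set MeasureTheory Filter
open scoped Topology

theorem ConcaveOn.antitoneOn_div_self {φ : ℝ → ℝ} (hconc : ConcaveOn ℝ (Ici 0) φ)
    (h0 : φ 0 = 0) :
    AntitoneOn (fun t => φ t / t) (Ioi 0) := by
  intro s hs t ht hst
  simpa [slope_def_field, h0] using
    hconc.antitoneOn_slope_gt self_mem_Ici ⟨mem_Ici.2 hs.le, hs⟩
      ⟨mem_Ici.2 ht.le, ht⟩ hst

theorem AntitoneOn.intervalIntegral_mem_Icc {g : ℝ → ℝ} {u v : ℝ} (huv : u ≤ v)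
    (hg : AntitoneOn g (Icc u v)) :
    ∫ s in u..v, g s ∈ Icc ((v - u) * g v) ((v - u) * g u) := by
  have hint : IntervalIntegrable g volume u v :=
    AntitoneOn.intervalIntegrable (by rwa [uIcc_of_le huv])
  have hu : u ∈ Icc u v := left_mem_Icc.2 huv
  have hv : v ∈ Icc u v := right_mem_Icc.2 huv
  constructor
  · simpa using intervalIntegral.integral_mono_on huv intervalIntegrable_const hint
      fun s hs => hg hs hv hs.2
  · simpa using intervalIntegral.integral_mono_on huv hint intervalIntegrable_const
      fun s hs => hg hu hs hs.1

theorem setIntegral_Ioo_sub_setIntegral_Ioo {g : ℝ → ℝ} {a x y : ℝ} (hx : a ≤ x)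
    (hy : a ≤ y) (hgx : IntegrableOn g (Ioo a x)) (hgy : IntegrableOn g (Ioo a y)) :
    (∫ s in Ioo a x, g s) - ∫ s in Ioo a y, g s = ∫ s in y..x, g s := by
  rw [← intervalIntegrable_iff_integrableOn_Ioo_of_le hx] at hgx
  rw [← intervalIntegrable_iff_integrableOn_Ioo_of_le hy] at hgy
  rw [← integral_Ioc_eq_integral_Ioo, ← integral_Ioc_eq_integral_Ioo,
    ← intervalIntegral.integral_of_le hx, ← intervalIntegral.integral_of_le hy,
    intervalIntegral.integral_interval_sub_left hgx hgy]

section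

variable {φ : ℝ → ℝ}

theorem pos_of_strictMonoOn_Ici (hmono : StrictMonoOn φ (Ici 0)) (h0 : φ 0 = 0) {t : ℝ}
    (ht : 0 < t) : 0 < φ t :=
  h0 ▸ hmono self_mem_Ici (mem_Ici.2 ht.le) ht

theorem antitoneOn_one_div_of_strictMonoOn_Ici (hmono : StrictMonoOn φ (Ici 0)) (h0 : φ 0 = 0) :
    AntitoneOn (fun s => 1 / φ s) (Ioi 0) := fun _ hs _ ht hst =>
  one_div_le_one_div_of_le (pos_of_strictMonoOn_Ici hmono h0 hs)
    (hmono.monotoneOn (mem_Ici.2 hs.le) (mem_Ici.2 ht.le) hst)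

theorem integrableOn_one_div_Ioo_zero (hmono : StrictMonoOn φ (Ici 0)) (h0 : φ 0 = 0)
    (hint : IntegrableOn (fun s => 1 / φ s) (Ioo 0 1)) (y : ℝ) :
    IntegrableOn (fun s => 1 / φ s) (Ioo 0 y) := by
  have hIcc : IntegrableOn (fun s => 1 / φ s) (Icc 1 y) :=
    ((antitoneOn_one_div_of_strictMonoOn_Ici hmono h0).mono
      fun s hs => lt_of_lt_of_le one_pos hs.1).integrableOn_isCompact isCompact_Icc
  refine (hint.union hIcc).mono_set fun s hs => ?_
  rcases lt_or_ge s 1 with h | h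
  · exact Or.inl ⟨hs.1, h⟩
  · exact Or.inr ⟨h, hs.2.le⟩

theorem two_mul_le_of_map_eq_two_mul (hmono : StrictMonoOn φ (Ici 0))
    (hconc : ConcaveOn ℝ (Ici 0) φ) (h0 : φ 0 = 0) {x y : ℝ} (hx : 0 ≤ x) (hy : 0 < y)
    (hxy : φ x = 2 * φ y) : 2 * y ≤ x := by
  have hslope : φ (2 * y) / (2 * y) ≤ φ y / y :=
    hconc.antitoneOn_div_self h0 hy (by simp; positivity) (by linarith)
  rw [div_le_div_iff₀ (by positivity) hy] at hslope
  refine (hmono.le_iff_le (mem_Ici.2 (by positivity)) (mem_Ici.2 hx)).1 ?_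
  nlinarith

theorem intervalIntegral_one_div_mem_Icc (hmono : StrictMonoOn φ (Ici 0))
    (hconc : ConcaveOn ℝ (Ici 0) φ) (h0 : φ 0 = 0) {x y : ℝ} (hx : 0 ≤ x) (hy : 0 < y)
    (hxy : φ x = 2 * φ y) :
    ∫ s in y..x, 1 / φ s ∈ Icc (x / φ x / 2) (2 * (x / φ x)) := by
  have h2yx := two_mul_le_of_map_eq_two_mul hmono hconc h0 hx hy hxy
  have hφy := pos_of_strictMonoOn_Ici hmono h0 hy
  obtain ⟨hlo, hhi⟩ := ((antitoneOn_one_div_of_strictMonoOn_Ici hmono h0).mono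
    fun s hs => lt_of_lt_of_le hy hs.1).intervalIntegral_mem_Icc (u := y) (v := x) (by linarith)
  rw [hxy] at hlo ⊢
  constructor
  · calc x / (2 * φ y) / 2 = x / 2 * (1 / (2 * φ y)) := by ring
      _ ≤ (x - y) * (1 / (2 * φ y)) := by gcongr; linarith
      _ ≤ _ := hlo
  · calc _ ≤ (x - y) * (1 / φ y) := hhi
      _ ≤ x * (1 / φ y) := by gcongr; linarith
      _ = 2 * (x / (2 * φ y)) := by field_simp

theorem div_map_le_of_map_eq_two_mul (hmono : StrictMonoOn φ (Ici 0))
    (hconc : ConcaveOn ℝ (Ici 0) φ) (h0 : φ 0 = 0) {x y : ℝ} (hx : 0 ≤ x) (hy : 0 < y)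
    (hxy : φ x = 2 * φ y) : y / φ y ≤ x / φ x := by
  have h2yx := two_mul_le_of_map_eq_two_mul hmono hconc h0 hx hy hxy
  have hφy := pos_of_strictMonoOn_Ici hmono h0 hy
  rw [hxy, div_le_div_iff₀ hφy (by positivity)]
  nlinarith

theorem pos_of_leftInvOn_Ici {φinv : ℝ → ℝ} (hcont : ContinuousOn φ (Ici 0))
    (htop : Tendsto φ atTop atTop) (h0 : φ 0 = 0) (hlinv : LeftInvOn φinv φ (Ici 0))
    {s : ℝ} (hs : 0 < s) : 0 < φinv s := by
  obtain ⟨t, ht, rfl⟩ := intermediate_value_Ici hcont htop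
    (show s ∈ Ici (φ 0) by rw [mem_Ici, h0]; exact hs.le)
  rw [hlinv ht]
  refine lt_of_le_of_ne ht fun h => ?_
  rw [← h, h0] at hs
  exact hs.false

end

theorem le_div_mul_of_div_le_of_le_div {f ρ : ℕ → ℝ} {c C : ℝ} (hc : 0 < c) (hC : 0 ≤ C)
    (hρ : ∀ j, 0 < ρ j) (hρ_anti : Antitone ρ) (hlo : ∀ j, c / ρ j ≤ f j)
    (hhi : ∀ j, f j ≤ C / ρ j) {m n : ℕ} (hmn : m ≤ n) :
    f m ≤ C / c * f n :=
  calc f m ≤ C / ρ m := hhi m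
    _ ≤ C / ρ n := div_le_div_of_nonneg_left hC (hρ n) (hρ_anti hmn)
    _ = C / c * (c / ρ n) := by field_simp
    _ ≤ C / c * f n := by gcongr; exact hlo n

noncomputable def integralOneDiv (φ : ℝ → ℝ) (y : ℝ) : ℝ := ∫ s in Ioo 0 y, 1 / φ s

theorem integralOneDiv_ratio_le_mul_ratio {φ : ℝ → ℝ} (hmono : StrictMonoOn φ (Ici 0))
    (hconc : ConcaveOn ℝ (Ici 0) φ) (h0 : φ 0 = 0)
    (hint : IntegrableOn (fun s => 1 / φ s) (Ioo 0 1)) {x : ℕ → ℝ} (hx : ∀ j, 0 < x j)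
    (hφx : ∀ j, φ (x j) = 2 * φ (x (j + 1))) {m n : ℕ} (hmn : m ≤ n) :
    (1 + integralOneDiv φ (x m)) /
        (integralOneDiv φ (x m) - integralOneDiv φ (x (m + 1))) ≤
      4 * (1 + integralOneDiv φ (x 0)) * ((1 + integralOneDiv φ (x n)) /
        (integralOneDiv φ (x n) - integralOneDiv φ (x (n + 1)))) := by
  set I := integralOneDiv φ
  set ρ : ℕ → ℝ := fun j => x j / φ (x j)
  have hD (j : ℕ) : I (x j) - I (x (j + 1)) ∈ Icc (ρ j / 2) (2 * ρ j) := by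
    have hsub : I (x j) - I (x (j + 1)) = ∫ s in x (j + 1)..x j, 1 / φ s :=
      setIntegral_Ioo_sub_setIntegral_Ioo (hx j).le (hx _).le
        (integrableOn_one_div_Ioo_zero hmono h0 hint _)
        (integrableOn_one_div_Ioo_zero hmono h0 hint _)
    rw [hsub]
    exact intervalIntegral_one_div_mem_Icc hmono hconc h0 (hx j).le (hx _) (hφx j)
  have hρ_pos (j : ℕ) : 0 < ρ j := div_pos (hx j) (pos_of_strictMonoOn_Ici hmono h0 (hx j))
  have hρ_anti : Antitone ρ := antitone_nat_of_succ_le fun j =>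
    div_map_le_of_map_eq_two_mul hmono hconc h0 (hx j).le (hx _) (hφx j)
  have hI_nonneg (j : ℕ) : 0 ≤ I (x j) := setIntegral_nonneg measurableSet_Ioo
    fun s hs => (one_div_pos.2 (pos_of_strictMonoOn_Ici hmono h0 hs.1)).le
  have hI_le (j : ℕ) : I (x j) ≤ I (x 0) := antitone_nat_of_succ_le (f := fun j => I (x j))
    (fun j => by linarith [(hD j).1, hρ_pos j]) (Nat.zero_le j)
  have hlo (j : ℕ) : 1 / 2 / ρ j ≤ (1 + I (x j)) / (I (x j) - I (x (j + 1))) :=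
    calc 1 / 2 / ρ j = 1 / (2 * ρ j) := by ring
      _ ≤ _ := div_le_div₀ (by linarith [hI_nonneg j]) (by linarith [hI_nonneg j])
          (by linarith [(hD j).1, hρ_pos j]) (hD j).2
  have hhi (j : ℕ) : (1 + I (x j)) / (I (x j) - I (x (j + 1))) ≤ 2 * (1 + I (x 0)) / ρ j :=
    calc _ ≤ (1 + I (x 0)) / (ρ j / 2) := div_le_div₀ (by linarith [hI_nonneg 0])
          (by linarith [hI_le j]) (half_pos (hρ_pos j)) (hD j).1
      _ = 2 * (1 + I (x 0)) / ρ j := by field_simp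
  calc _ ≤ 2 * (1 + I (x 0)) / (1 / 2) * _ := le_div_mul_of_div_le_of_le_div (by norm_num)
          (by linarith [hI_nonneg 0]) hρ_pos hρ_anti hlo hhi hmn
    _ = _ := by ring

theorem lambda_seq_sup_le_general (φ φinv : ℝ → ℝ)
    (hmono : StrictMonoOn φ (Ici 0))
    (hcont : ContinuousOn φ (Ici 0))
    (hconc : ConcaveOn ℝ (Ici 0) φ)
    (h0 : φ 0 = 0)
    (htop : Tendsto φ atTop atTop)
    (hlinv : ∀ t, 0 ≤ t → φinv (φ t) = t)
    (hrinv : ∀ s, 0 ≤ s → φ (φinv s) = s)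
    (hint : IntegrableOn (fun s => 1 / φ s) (Ioo (0:ℝ) 1))
    (N : ℝ)
    (α : ℕ → ℝ)
    (hα : ∀ k : ℕ, α k = (2:ℝ) ^ (-(N + (k:ℝ))) *
      (1 + ∫ s in Ioo (0:ℝ) (φinv ((2:ℝ) ^ (-(N + (k:ℝ))))), 1 / φ s))
    (β : ℕ → ℝ)
    (hβ : ∀ k : ℕ, β (k + 1) = (α k - 2 * α (k + 1)) / 4)
    (lam : ℕ → ℝ)
    (hlam : ∀ k : ℕ, lam (k + 1) = α k / β (k + 1)) :
    ∃ C : ℝ, 0 < C ∧ ∀ k : ℕ, 2 ≤ k → ∀ ℓ : ℕ, 1 ≤ ℓ → ℓ < k → lam ℓ ≤ C * lam k := by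
  set a : ℕ → ℝ := fun j => (2:ℝ) ^ (-(N + j))
  set x : ℕ → ℝ := fun j => φinv (a j)
  set I := integralOneDiv φ
  have ha_pos (j : ℕ) : 0 < a j := by positivity
  have ha_succ (j : ℕ) : a j = 2 * a (j + 1) := by
    simp only [a, Nat.cast_succ, neg_add, Real.rpow_add two_pos, Real.rpow_neg_one]
    ring
  have hx_pos (j : ℕ) : 0 < x j :=
    pos_of_leftInvOn_Ici hcont htop h0 (fun t ht => hlinv t ht) (ha_pos j)
  have hφx (j : ℕ) : φ (x j) = 2 * φ (x (j + 1)) := by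
    rw [hrinv _ (ha_pos j).le, hrinv _ (ha_pos _).le, ha_succ]
  have hlam_eq (j : ℕ) : lam (j + 1) = 4 * ((1 + I (x j)) / (I (x j) - I (x (j + 1)))) := by
    have hα' (k : ℕ) : α k = a k * (1 + I (x k)) := hα k
    have := (ha_pos (j + 1)).ne'
    rw [hlam, hβ, hα', hα', ha_succ j]
    field_simp
    ring
  have hI_nonneg : 0 ≤ I (x 0) := setIntegral_nonneg measurableSet_Ioo
    fun s hs => (one_div_pos.2 (pos_of_strictMonoOn_Ici hmono h0 hs.1)).le
  refine ⟨4 * (1 + I (x 0)), by positivity, fun k hk ℓ hℓ hℓk => ?_⟩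
  obtain ⟨m, rfl⟩ : ∃ m, ℓ = m + 1 := ⟨ℓ - 1, by omega⟩
  obtain ⟨n, rfl⟩ : ∃ n, k = n + 1 := ⟨k - 1, by omega⟩
  rw [hlam_eq, hlam_eq, mul_left_comm]
  gcongr
  exact integralOneDiv_ratio_le_mul_ratio hmono hconc h0 hint hx_pos hφx (by omega)

/-- For `λ_k = α_{k−1}/β_k` there is a constant `C > 0` depending only on `φ`
such that `sup_{1 ≤ ℓ < k} λ_ℓ ≤ C λ_k` for all `k ≥ 2`. -/
theorem lambda_seq_sup_le (φ φinv : ℝ → ℝ)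
    (hmono : StrictMonoOn φ (Ici 0))
    (hcont : ContinuousOn φ (Ici 0))
    (hconc : ConcaveOn ℝ (Ici 0) φ)
    (h0 : φ 0 = 0)
    (hnonneg : ∀ t, 0 ≤ t → 0 ≤ φ t)
    (htop : Tendsto φ atTop atTop)
    (hlinv : ∀ t, 0 ≤ t → φinv (φ t) = t)
    (hrinv : ∀ s, 0 ≤ s → φ (φinv s) = s)
    (hint : IntegrableOn (fun s => 1 / φ s) (Ioo (0:ℝ) 1))
    (N : ℝ) (hN : 0 < N)
    (hNeq : (2:ℝ) ^ (-N) * (1 + ∫ s in Ioo (0:ℝ) (φinv ((2:ℝ) ^ (-N))), 1 / φ s) = 1)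
    (α : ℕ → ℝ)
    (hα : ∀ k : ℕ, α k = (2:ℝ) ^ (-(N + (k:ℝ))) *
      (1 + ∫ s in Ioo (0:ℝ) (φinv ((2:ℝ) ^ (-(N + (k:ℝ))))), 1 / φ s))
    (β : ℕ → ℝ)
    (hβ : ∀ k : ℕ, β (k + 1) = (α k - 2 * α (k + 1)) / 4)
    (lam : ℕ → ℝ)
    (hlam : ∀ k : ℕ, lam (k + 1) = α k / β (k + 1)) :
    ∃ C : ℝ, 0 < C ∧ ∀ k : ℕ, 2 ≤ k → ∀ ℓ : ℕ, 1 ≤ ℓ → ℓ < k → lam ℓ ≤ C * lam k :=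
  lambda_seq_sup_le_general φ φinv hmono hcont hconc h0 htop hlinv hrinv hint N α hα β hβ lam hlam
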